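/- arXiv:1803.09758 — 3 statements merged into one kernel-verified Lean document; each statement's English description precedes it below -/
import Mathlib

section
/- Let n ≥ 1 and r ≥ 1 be natural numbers and let H be an r × n matrix over ZMod 2. Then the map p ↦ H·v_p (matrix-vector product of H with the consecutive tail vector v_p) is injective on {0, 1, …, n−1} if and only if for all p, q ∈ {0, 1, …, n−1} with p > q there exists a row index i ∈ {1, …, r} such that the sum over ZMod 2 of the entries of row i of H over the columns n−p+1 through n−q (1-indexed; equivalently, the 0-indexed columns j with n−p ≤ j ≤ n−q−1) equals 1. (This is Lemma 1, Statements 1 and 2 of the paper: the consecutive-Z error set E^z_{0,n} is distinguishable by a CSS code if and only if its X-stabilizer parity check matrix H = H_x satisfies this window condition, and symmetrically for E^x_{0,n} and H_z.) -/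
/-- The consecutive tail vector `v_p`: indicator of the last `p` coordinates. -/
def tailVec (n p : ℕ) : Fin n → ZMod 2 := fun j => if n - p ≤ j.val then 1 else 0

/-- Left cyclic shift by `l` of a vector `v : Fin n → ZMod 2`. -/
def shiftL {n : ℕ} (v : Fin n → ZMod 2) (l : ℕ) : Fin n → ZMod 2 :=
  fun j => v ⟨(j.val + l) % n, Nat.mod_lt _ j.pos⟩

/-- A code is cyclic if it is invariant under left cyclic shifts. -/
def IsCyclicCode {n : ℕ} (C : Submodule (ZMod 2) (Fin n → ZMod 2)) : Prop :=
  ∀ v ∈ C, ∀ l : ℕ, shiftL v l ∈ C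

/-- The dual code `C⊥` with respect to the standard bilinear form. -/
def dualCode {n : ℕ} (C : Submodule (ZMod 2) (Fin n → ZMod 2)) :
    Submodule (ZMod 2) (Fin n → ZMod 2) where
  carrier := {u | ∀ w ∈ C, ∑ j, u j * w j = 0}
  add_mem' := by
    intro a b ha hb w hw
    simp only [Set.mem_setOf_eq, Pi.add_apply, add_mul] at *
    rw [Finset.sum_add_distrib, ha w hw, hb w hw, add_zero]
  zero_mem' := by
    intro w hw
    simp
  smul_mem' := by
    intro c a ha w hw
    simp only [Set.mem_setOf_eq, Pi.smul_apply, smul_eq_mul, mul_assoc] at *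
    rw [← Finset.mul_sum, ha w hw, mul_zero]

theorem Set.injOn_iff_ne_of_lt {α β : Type*} [LinearOrder α] {f : α → β} {s : Set α} :
    s.InjOn f ↔ ∀ p q, p ∈ s → q ∈ s → q < p → f p ≠ f q := by
  refine ⟨fun h p q hp hq hqp heq => hqp.ne' (h hp hq heq), fun h p hp q hq heq => ?_⟩
  rcases lt_trichotomy p q with hpq | rfl | hqp
  · exact absurd heq.symm (h q p hq hp hpq)
  · rfl
  · exact absurd heq (h p q hp hq hqp)

theorem ZMod.two_ne_zero_iff_eq_one (x : ZMod 2) : x ≠ 0 ↔ x = 1 := by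
  revert x; decide

theorem mulVec_tailVec_sub_mulVec_tailVec {n r : ℕ} (H : Matrix (Fin r) (Fin n) (ZMod 2))
    {p q : ℕ} (hqp : q ≤ p) (i : Fin r) :
    (H.mulVec (tailVec n p)) i - (H.mulVec (tailVec n q)) i =
      ∑ j : Fin n, if n - p ≤ j.val ∧ j.val < n - q then H i j else 0 := by
  simp only [Matrix.mulVec, dotProduct, ← Finset.sum_sub_distrib, tailVec]
  refine Finset.sum_congr rfl fun j _ => ?_
  have : n - p ≤ n - q := Nat.sub_le_sub_left hqp n
  split_ifs <;> first | omega | ring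

theorem stmt0_general (n r : ℕ)
    (H : Matrix (Fin r) (Fin n) (ZMod 2)) :
    Set.InjOn (fun p : ℕ => H.mulVec (tailVec n p)) (Set.Iio n) ↔
      ∀ p q : ℕ, p < n → q < n → p > q →
        ∃ i : Fin r,
          (∑ j : Fin n, if n - p ≤ j.val ∧ j.val < n - q then H i j else 0) = 1 := by
  rw [Set.injOn_iff_ne_of_lt]
  refine forall₂_congr fun p q =>
    imp_congr_right fun _ => imp_congr_right fun _ => imp_congr_right fun hqp => ?_
  simp only [Function.ne_iff, ← sub_ne_zero (a := H.mulVec (tailVec n p) _),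
    mulVec_tailVec_sub_mulVec_tailVec H hqp.le, ZMod.two_ne_zero_iff_eq_one]

theorem stmt0 (n r : ℕ) (hn : 1 ≤ n) (hr : 1 ≤ r)
    (H : Matrix (Fin r) (Fin n) (ZMod 2)) :
    Set.InjOn (fun p : ℕ => H.mulVec (tailVec n p)) (Set.Iio n) ↔
      ∀ p q : ℕ, p < n → q < n → p > q →
        ∃ i : Fin r,
          (∑ j : Fin n, if n - p ≤ j.val ∧ j.val < n - q then H i j else 0) = 1 :=
  stmt0_general n r H
end

section
/- Let n ≥ 1, let C be a cyclic ZMod 2-submodule of (Fin n → ZMod 2), and let H be a parity check matrix of C, i.e., an r × n matrix over ZMod 2 whose kernel under e ↦ H·e equals C. Then for every l ∈ {0, 1, …, n−1}: the map p ↦ H·L(v_p, l) is injective on {0, 1, …, n−1} if and only if for every u ∈ {2, …, n} there exists a row index i such that the sum over ZMod 2 of the entries of row i of H over columns u through n (1-indexed; equivalently 0-indexed columns u−1 through n−1) equals 1. (This is Lemma 3, Statements 1 and 2 of the paper: for cyclic CSS codes, the distinguishability condition for the shifted consecutive error sets E^z_{l,n} and E^x_{l,n} simplifies to a condition on column tail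 sums.) -/
/-!
Since `H e = H e'` exactly when `e - e' ∈ C`, two shifted tails `L(v_p, l)` and `L(v_q, l)`
with `q < p` have the same syndrome iff `L(v_p - v_q, l) ∈ C`. Over `ZMod 2`, `v_p - v_q` is the
indicator of the coordinates `n - p ≤ j < n - q`, a cyclic shift of `v_{p-q}`; as `C` is cyclic,
injectivity thus means that no tail `v_d` with `0 < d < n` is a codeword, i.e. that some row of
`H` has odd weight on the last `d` columns.
-/

open Matrix

section Shift

variable {n : ℕ}

lemma shiftL_sub (a b : Fin n → ZMod 2) (l : ℕ) :
    shiftL (a - b) l = shiftL a l - shiftL b l := rfl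

lemma shiftL_shiftL (v : Fin n → ZMod 2) (a b : ℕ) :
    shiftL (shiftL v a) b = shiftL v (b + a) := by
  funext j
  simp only [shiftL]
  congr 1
  exact Fin.ext (by simp [Nat.mod_add_mod, Nat.add_assoc])

lemma shiftL_mul_self (v : Fin n → ZMod 2) (k : ℕ) : shiftL v (n * k) = v := by
  funext j
  simp [shiftL, Nat.mod_eq_of_lt j.isLt]

lemma IsCyclicCode.shiftL_mem_iff {C : Submodule (ZMod 2) (Fin n → ZMod 2)}
    (hC : IsCyclicCode C) (v : Fin n → ZMod 2) (l : ℕ) : shiftL v l ∈ C ↔ v ∈ C := by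
  refine ⟨fun h => ?_, fun h => hC v h l⟩
  rcases Nat.eq_zero_or_pos n with rfl | hn
  · rwa [Subsingleton.elim v (shiftL v l)]
  · have h' := hC _ h ((n - 1) * l)
    rwa [shiftL_shiftL, ← Nat.succ_mul, Nat.succ_eq_add_one, Nat.sub_add_cancel hn,
      shiftL_mul_self] at h'

end Shift

section Tail

variable {n : ℕ}

lemma tailVec_zero : tailVec n 0 = 0 := by
  funext j
  simp [tailVec, j.isLt]

lemma shiftL_tailVec_sub_tailVec {p q : ℕ} (hqp : q ≤ p) (hpn : p ≤ n) :
    shiftL (tailVec n p - tailVec n q) (n - q) = tailVec n (p - q) := by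
  funext j
  have hj := j.isLt
  simp only [shiftL, tailVec, Pi.sub_apply]
  rcases lt_or_ge j.val q with h | h
  · simp only [Nat.mod_eq_of_lt (show j.val + (n - q) < n by omega)]
    split_ifs <;> first | rfl | omega
  · simp only [show j.val + (n - q) = (j.val - q) + n by omega, Nat.add_mod_right,
      Nat.mod_eq_of_lt (show j.val - q < n by omega)]
    split_ifs <;> first | rfl | omega

lemma IsCyclicCode.tailVec_sub_mem_iff {C : Submodule (ZMod 2) (Fin n → ZMod 2)}
    (hC : IsCyclicCode C) {p q : ℕ} (hqp : q ≤ p) (hpn : p ≤ n) :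
    tailVec n p - tailVec n q ∈ C ↔ tailVec n (p - q) ∈ C := by
  rw [← shiftL_tailVec_sub_tailVec hqp hpn, hC.shiftL_mem_iff]

lemma mulVec_tailVec_apply {r : ℕ} (H : Matrix (Fin r) (Fin n) (ZMod 2)) (p : ℕ) (i : Fin r) :
    (H *ᵥ tailVec n p) i = ∑ j : Fin n, if n - p ≤ j.val then H i j else 0 := by
  simp only [mulVec, dotProduct, tailVec, mul_ite, mul_one, mul_zero]

lemma mulVec_tailVec_ne_zero_iff {r : ℕ} (H : Matrix (Fin r) (Fin n) (ZMod 2)) (p : ℕ) :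
    H *ᵥ tailVec n p ≠ 0 ↔ ∃ i : Fin r, (∑ j : Fin n, if n - p ≤ j.val then H i j else 0) = 1 := by
  have hne : ∀ x : ZMod 2, x ≠ 0 ↔ x = 1 := by decide
  simp only [Function.ne_iff, Pi.zero_apply, hne, mulVec_tailVec_apply]

end Tail

lemma mulVec_eq_mulVec_iff_sub_mem {R ι κ : Type*} [Ring R] [Fintype κ]
    {C : Submodule R (κ → R)} {H : Matrix ι κ R} (hH : ∀ e, H *ᵥ e = 0 ↔ e ∈ C) (a b : κ → R) :
    H *ᵥ a = H *ᵥ b ↔ a - b ∈ C := by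
  rw [← hH, mulVec_sub, sub_eq_zero]

theorem IsCyclicCode.injOn_mulVec_shiftL_tailVec_iff {n r : ℕ}
    {C : Submodule (ZMod 2) (Fin n → ZMod 2)} (hC : IsCyclicCode C)
    {H : Matrix (Fin r) (Fin n) (ZMod 2)} (hH : ∀ e, H *ᵥ e = 0 ↔ e ∈ C) (l : ℕ) :
    Set.InjOn (fun p => H *ᵥ shiftL (tailVec n p) l) (Set.Iio n) ↔
      ∀ d, 0 < d → d < n → tailVec n d ∉ C := by
  have hsyndrome : ∀ {p q : ℕ}, q ≤ p → p ≤ n →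
      (H *ᵥ shiftL (tailVec n p) l = H *ᵥ shiftL (tailVec n q) l ↔ tailVec n (p - q) ∈ C) := by
    intro p q hqp hpn
    rw [mulVec_eq_mulVec_iff_sub_mem hH, ← shiftL_sub, hC.shiftL_mem_iff,
      hC.tailVec_sub_mem_iff hqp hpn]
  constructor
  · intro hinj d hd0 hdn hd
    have hcollide := (hsyndrome (Nat.zero_le d) hdn.le).2 (by simpa using hd)
    exact hd0.ne' (hinj hdn (show 0 < n by omega) hcollide)
  · intro htail p (hp : p < n) q (hq : q < n) hpq
    wlog hqp : q ≤ p generalizing p q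
    · exact (this hq hp hpq.symm (le_of_not_ge hqp)).symm
    by_contra hne
    exact htail (p - q) (by omega) (by omega) ((hsyndrome hqp hp.le).1 hpq)

theorem stmt3_general (n r : ℕ) (C : Submodule (ZMod 2) (Fin n → ZMod 2))
    (hC : IsCyclicCode C) (H : Matrix (Fin r) (Fin n) (ZMod 2))
    (hH : ∀ e : Fin n → ZMod 2, H.mulVec e = 0 ↔ e ∈ C) :
    ∀ l < n,
      (Set.InjOn (fun p : ℕ => H.mulVec (shiftL (tailVec n p) l)) (Set.Iio n) ↔
        ∀ u : ℕ, 2 ≤ u → u ≤ n →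
          ∃ i : Fin r, (∑ j : Fin n, if u - 1 ≤ j.val then H i j else 0) = 1) := by
  intro l _
  rw [hC.injOn_mulVec_shiftL_tailVec_iff hH l]
  constructor
  · intro htail u hu2 hun
    have hd := htail (n + 1 - u) (by omega) (by omega)
    rw [← hH, ← ne_eq, mulVec_tailVec_ne_zero_iff] at hd
    simpa only [show n - (n + 1 - u) = u - 1 by omega] using hd
  · intro hsum d hd0 hdn
    rw [← hH, ← ne_eq, mulVec_tailVec_ne_zero_iff]
    simpa only [show n + 1 - d - 1 = n - d by omega] using hsum (n + 1 - d) (by omega) (by omega)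

theorem stmt3 (n r : ℕ) (hn : 1 ≤ n) (C : Submodule (ZMod 2) (Fin n → ZMod 2))
    (hC : IsCyclicCode C) (H : Matrix (Fin r) (Fin n) (ZMod 2))
    (hH : ∀ e : Fin n → ZMod 2, H.mulVec e = 0 ↔ e ∈ C) :
    ∀ l < n,
      (Set.InjOn (fun p : ℕ => H.mulVec (shiftL (tailVec n p) l)) (Set.Iio n) ↔
        ∀ u : ℕ, 2 ≤ u → u ≤ n →
          ∃ i : Fin r, (∑ j : Fin n, if u - 1 ≤ j.val then H i j else 0) = 1) :=
  stmt3_general n r C hC H hH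
end

section
/- Let n be a positive natural number and let C_x and C_z be ZMod 2-submodules of (Fin n → ZMod 2) with dim C_x = k_x and dim C_z = k_z (finite ZMod 2-dimensions), and suppose C_x⊥ ⊆ C_z. Then the dimension over ZMod 2 of the quotient module C_z / C_x⊥ satisfies dim(C_z / C_x⊥) + n = k_x + k_z; equivalently, the CSS code built from C_x and C_z encodes k = k_x + k_z − n logical qubits. (This is the parameter count in the CSS code construction, Theorem 1 of the paper; it uses that dim C_x⊥ = n − k_x over ZMod 2.) -/
/-! Under the dot-product identification of `𝔽₂ⁿ` with its dual, `C⊥` is the annihilator of `C`,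
so `dim C_x⊥ = n - k_x`; and `C_z / C_x⊥` has dimension `k_z - dim C_x⊥`. -/

open Module

theorem Submodule.finrank_quotient_comap_subtype_add_finrank {K V : Type*} [DivisionRing K]
    [AddCommGroup V] [Module K V] {S T : Submodule K V} (hST : S ≤ T) [FiniteDimensional K T] :
    finrank K (T ⧸ comap T.subtype S) + finrank K S = finrank K T := by
  rw [← (comapSubtypeEquivOfLe hST).finrank_eq]
  exact (comap T.subtype S).finrank_quotient_add_finrank

theorem dualCode_eq_comap_dualAnnihilator {n : ℕ} (C : Submodule (ZMod 2) (Fin n → ZMod 2)) :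
    dualCode C = C.dualAnnihilator.comap (dotProductEquiv (ZMod 2) (Fin n)).toLinearMap := by
  ext u
  simp only [Submodule.mem_comap, Submodule.mem_dualAnnihilator]
  rfl

theorem finrank_dualCode_add_finrank {n : ℕ} (C : Submodule (ZMod 2) (Fin n → ZMod 2)) :
    finrank (ZMod 2) (dualCode C) + finrank (ZMod 2) C = n := by
  rw [dualCode_eq_comap_dualAnnihilator, Submodule.comap_equiv_eq_map_symm,
    LinearEquiv.finrank_map_eq, add_comm, Subspace.finrank_add_finrank_dualAnnihilator_eq,
    finrank_fin_fun]

theorem stmt14_general (n : ℕ) (kx kz : ℕ)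
    (Cx Cz : Submodule (ZMod 2) (Fin n → ZMod 2))
    (hkx : Module.finrank (ZMod 2) Cx = kx)
    (hkz : Module.finrank (ZMod 2) Cz = kz)
    (hsub : dualCode Cx ≤ Cz) :
    Module.finrank (ZMod 2) (Cz ⧸ Submodule.comap Cz.subtype (dualCode Cx)) + n =
      kx + kz := by
  have hquot := Submodule.finrank_quotient_comap_subtype_add_finrank hsub
  have hdual := finrank_dualCode_add_finrank Cx
  omega

theorem stmt14 (n : ℕ) (hn : 0 < n) (kx kz : ℕ)
    (Cx Cz : Submodule (ZMod 2) (Fin n → ZMod 2))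
    (hkx : Module.finrank (ZMod 2) Cx = kx)
    (hkz : Module.finrank (ZMod 2) Cz = kz)
    (hsub : dualCode Cx ≤ Cz) :
    Module.finrank (ZMod 2) (Cz ⧸ Submodule.comap Cz.subtype (dualCode Cx)) + n =
      kx + kz :=
  stmt14_general n kx kz Cx Cz hkx hkz hsub
end
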